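/- arXiv:2402.12705 — 3 statements merged into one kernel-verified Lean document; each statement's English description precedes it below -/
import Mathlib

section
/- Let P be a path on n vertices and k ≥ d+2. For any (d,k)-coloring α of P, there exists a (d, d+1)-coloring β of P (i.e., one using at most d+1 colors) and a reconfiguration sequence of (d,k)-colorings from α to β in which consecutive colorings differ at exactly one vertex. -/
/-- A (d,k)-coloring of the path on `n` vertices `v_0, …, v_{n-1}`
(distance between `v_i` and `v_j` is `|i - j|`). -/
def IsPathDKColoring (n d k : ℕ) (α : Fin n → Fin k) : Prop :=
  ∀ i j : Fin n, i ≠ j → Nat.dist i.val j.val ≤ d → α i ≠ α j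

/-- Two colorings differ at exactly one vertex. -/
def OneStep {n k : ℕ} (α β : Fin n → Fin k) : Prop :=
  ∃ v : Fin n, α v ≠ β v ∧ ∀ w : Fin n, w ≠ v → α w = β w

/-- Reachability via single-vertex recolorings, through proper colorings. -/
def Reach (n d k : ℕ) (α β : Fin n → Fin k) : Prop :=
  ∃ (m : ℕ) (seq : ℕ → Fin n → Fin k),
    seq 0 = α ∧ seq m = β ∧
    (∀ i ≤ m, IsPathDKColoring n d k (seq i)) ∧
    (∀ i < m, OneStep (seq i) (seq (i + 1)))

lemma reach_refl {n d k : ℕ} {α : Fin n → Fin k} (h : IsPathDKColoring n d k α) :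
    Reach n d k α α :=
  ⟨0, fun _ => α, rfl, rfl, fun _ _ => h, fun i hi => absurd hi (Nat.not_lt_zero i)⟩

lemma reach_trans {n d k : ℕ} {α β γ : Fin n → Fin k}
    (h1 : Reach n d k α β) (h2 : Reach n d k β γ) : Reach n d k α γ := by
  obtain ⟨m1, s1, h10, h1m, h1p, h1s⟩ := h1
  obtain ⟨m2, s2, h20, h2m, h2p, h2s⟩ := h2
  refine ⟨m1 + m2, fun i => if i ≤ m1 then s1 i else s2 (i - m1), by simp [h10], ?_, ?_, ?_⟩
  · by_cases h : m2 = 0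
    · subst h
      simp only [Nat.add_zero, le_refl, if_pos]
      rw [h1m, ← h20, h2m]
    · have hle : ¬ (m1 + m2 ≤ m1) := by omega
      simp only [hle, if_neg, Nat.add_sub_cancel_left]
      exact h2m
  · intro i hi
    by_cases h : i ≤ m1
    · simp only [h, if_pos]; exact h1p i h
    · simp only [h, if_neg]; exact h2p (i - m1) (by omega)
  · intro i hi
    by_cases h : i + 1 ≤ m1
    · have h' : i ≤ m1 := by omega
      simp only [h, h', if_pos]
      exact h1s i (by omega)
    · by_cases h' : i ≤ m1
      · have hi1 : i = m1 := by omega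
        have hm2 : 0 < m2 := by omega
        simp only [h, h', if_pos, if_neg]
        subst hi1
        have e1 : s1 i = s2 0 := by rw [h1m, h20]
        have e2 : i + 1 - i = 1 := by omega
        rw [e1, e2]
        exact h2s 0 hm2
      · have h'' : ¬ (i + 1 ≤ m1) := h
        simp only [h, h', if_neg]
        have e : i + 1 - m1 = (i - m1) + 1 := by omega
        rw [e]
        exact h2s (i - m1) (by omega)

lemma reach_of_eq_or_onestep {n d k : ℕ} {α β : Fin n → Fin k}
    (hα : IsPathDKColoring n d k α) (hβ : IsPathDKColoring n d k β)
    (h : α = β ∨ OneStep α β) : Reach n d k α β := by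
  rcases h with rfl | h
  · exact reach_refl hα
  · refine ⟨1, fun i => if i = 0 then α else β, by simp, by simp, ?_, ?_⟩
    · intro i hi
      by_cases h0 : i = 0
      · simpa [h0] using hα
      · simpa [h0] using hβ
    · intro i hi
      have h0 : i = 0 := by omega
      subst h0
      simpa using h

lemma exists_free {k : ℕ} (F : Finset (Fin k)) (h : F.card < k) : ∃ c, c ∉ F := by
  by_contra hc
  push_neg at hc
  have : F = Finset.univ := Finset.eq_univ_iff_forall.mpr hc
  rw [this, Finset.card_univ, Fintype.card_fin] at h
  exact lt_irrefl k h

lemma mod_ne_of_dist_le {d a b : ℕ} (h : a ≠ b) (hd : Nat.dist a b ≤ d) :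
    a % (d + 1) ≠ b % (d + 1) := by
  intro he
  rcases Nat.lt_or_ge a b with hlt | hge
  · have hdvd : (d + 1) ∣ (b - a) := (Nat.modEq_iff_dvd' hlt.le).mp he
    have hle := Nat.le_of_dvd (by omega) hdvd
    have hdist : Nat.dist a b = a - b + (b - a) := rfl
    omega
  · have hlt : b < a := by omega
    have hdvd : (d + 1) ∣ (a - b) := (Nat.modEq_iff_dvd' hlt.le).mp he.symm
    have hle := Nat.le_of_dvd (by omega) hdvd
    have hdist : Nat.dist a b = a - b + (b - a) := rfl
    omega

/-- The canonical coloring with `d+1` colors. -/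
def canon (d k n : ℕ) (hk : d + 2 ≤ k) : Fin n → Fin k :=
  fun i => ⟨i.val % (d + 1), by
    have h1 : i.val % (d + 1) < d + 1 := Nat.mod_lt _ (Nat.succ_pos d)
    omega⟩

lemma canon_proper (d k n : ℕ) (hk : d + 2 ≤ k) :
    IsPathDKColoring n d k (canon d k n hk) := by
  intro i j hne hdist
  have hv : i.val ≠ j.val := fun h => hne (Fin.ext h)
  exact fun h => mod_ne_of_dist_le hv hdist (congrArg Fin.val h)

lemma snoc_proper {n d k : ℕ} {f : Fin n → Fin k} {b : Fin k}
    (hf : IsPathDKColoring n d k f)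
    (hb : ∀ w : Fin n, Nat.dist w.val n ≤ d → f w ≠ b) :
    IsPathDKColoring (n + 1) d k (Fin.snoc f b) := by
  intro i j hne hdist
  induction i using Fin.lastCases with
  | last =>
    induction j using Fin.lastCases with
    | last => exact absurd rfl hne
    | cast w =>
      rw [Fin.snoc_last, Fin.snoc_castSucc]
      have hw : Nat.dist w.val n ≤ d := by
        have := hdist
        simpa [Nat.dist_comm] using this
      exact (hb w hw).symm
  | cast w =>
    induction j using Fin.lastCases with
    | last =>
      rw [Fin.snoc_last, Fin.snoc_castSucc]
      have hw : Nat.dist w.val n ≤ d := by simpa using hdist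
      exact hb w hw
    | cast w' =>
      rw [Fin.snoc_castSucc, Fin.snoc_castSucc]
      refine hf w w' (fun h => hne (by rw [h])) ?_
      simpa using hdist

lemma snoc_step {n k : ℕ} (f : Fin n → Fin k) (b b' : Fin k) :
    Fin.snoc f b = (Fin.snoc f b' : Fin (n + 1) → Fin k) ∨
      OneStep (Fin.snoc f b) (Fin.snoc f b' : Fin (n + 1) → Fin k) := by
  by_cases h : b = b'
  · left; rw [h]
  · right
    refine ⟨Fin.last n, by simpa using h, ?_⟩
    intro w hw
    induction w using Fin.lastCases with
    | last => exact absurd rfl hw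
    | cast w => simp

lemma reach_canonical (d k : ℕ) (hk : d + 2 ≤ k) :
    ∀ n (α : Fin n → Fin k), IsPathDKColoring n d k α →
      Reach n d k α (canon d k n hk) := by
  intro n
  induction n with
  | zero =>
    intro α hα
    have he : canon d k 0 hk = α := funext fun i => i.elim0
    rw [he]
    exact reach_refl hα
  | succ n ih =>
    intro α hα
    have hα' : IsPathDKColoring n d k (Fin.init α) := by
      intro i j hne hdist
      have := hα i.castSucc j.castSucc (fun h => hne (Fin.castSucc_inj.mp h)) (by simpa using hdist)
      simpa [Fin.init] using this
    obtain ⟨m, s, hs0, hsm, hsp, hss⟩ := ih (Fin.init α) hα'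
    have key : ∀ i ≤ m, ∃ b : Fin k,
        IsPathDKColoring (n + 1) d k (Fin.snoc (s i) b) ∧
        Reach (n + 1) d k α (Fin.snoc (s i) b) := by
      intro i
      induction i with
      | zero =>
        intro _
        refine ⟨α (Fin.last n), ?_, ?_⟩
        · rw [hs0, Fin.snoc_init_self]; exact hα
        · rw [hs0, Fin.snoc_init_self]; exact reach_refl hα
      | succ i ih2 =>
        intro hi
        obtain ⟨b, hbp, hbr⟩ := ih2 (by omega)
        obtain ⟨u, hu_ne, hu_eq⟩ := hss i (by omega)
        set W : Finset (Fin n) := Finset.univ.filter (fun w => Nat.dist w.val n ≤ d) with hW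
        have hWmem : ∀ w : Fin n, Nat.dist w.val n ≤ d → w ∈ W := by
          intro w hw
          simp [hW, hw]
        have hWcard : W.card ≤ d := by
          have hinj := Finset.card_image_of_injective W (Fin.val_injective)
          have hsub : W.image Fin.val ⊆ Finset.Ico (n - d) n := by
            intro x hx
            simp only [Finset.mem_image] at hx
            obtain ⟨w, hwW, rfl⟩ := hx
            have hw : Nat.dist w.val n ≤ d := by
              have := (Finset.mem_filter.mp hwW).2
              exact this
            have hwn : w.val < n := w.isLt
            have hdist : Nat.dist w.val n = w.val - n + (n - w.val) := rfl
            simp only [Finset.mem_Ico]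
            omega
          have hle := Finset.card_le_card hsub
          rw [hinj] at hle
          have hico : (Finset.Ico (n - d) n).card = n - (n - d) := Nat.card_Ico _ _
          omega
        set F : Finset (Fin k) := W.image (s i) ∪ W.image (s (i + 1)) with hF
        have hFsub : F ⊆ insert (s (i + 1) u) (W.image (s i)) := by
          intro x hx
          rcases Finset.mem_union.mp hx with hx | hx
          · exact Finset.mem_insert_of_mem hx
          · obtain ⟨w, hwW, rfl⟩ := Finset.mem_image.mp hx
            by_cases hwu : w = u
            · subst hwu; exact Finset.mem_insert_self _ _
            · rw [← hu_eq w hwu]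
              exact Finset.mem_insert_of_mem (Finset.mem_image_of_mem _ hwW)
        have hFcard : F.card < k := by
          have h1 := Finset.card_le_card hFsub
          have h2 := Finset.card_insert_le (s (i + 1) u) (W.image (s i))
          have h3 := Finset.card_image_le (s := W) (f := s i)
          omega
        obtain ⟨b', hb'⟩ := exists_free F hFcard
        have hb1 : ∀ w : Fin n, Nat.dist w.val n ≤ d → s i w ≠ b' := by
          intro w hw he
          exact hb' (Finset.mem_union_left _ (he ▸ Finset.mem_image_of_mem _ (hWmem w hw)))
        have hb2 : ∀ w : Fin n, Nat.dist w.val n ≤ d → s (i + 1) w ≠ b' := by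
          intro w hw he
          exact hb' (Finset.mem_union_right _ (he ▸ Finset.mem_image_of_mem _ (hWmem w hw)))
        have hp1 : IsPathDKColoring (n + 1) d k (Fin.snoc (s i) b') :=
          snoc_proper (hsp i (by omega)) hb1
        have hp2 : IsPathDKColoring (n + 1) d k (Fin.snoc (s (i + 1)) b') :=
          snoc_proper (hsp (i + 1) hi) hb2
        refine ⟨b', hp2, ?_⟩
        have r1 : Reach (n + 1) d k (Fin.snoc (s i) b) (Fin.snoc (s i) b') :=
          reach_of_eq_or_onestep hbp hp1 (snoc_step _ _ _)
        have r2 : Reach (n + 1) d k (Fin.snoc (s i) b') (Fin.snoc (s (i + 1)) b') := by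
          refine reach_of_eq_or_onestep hp1 hp2 (Or.inr ⟨u.castSucc, ?_, ?_⟩)
          · simpa using hu_ne
          · intro w hw
            induction w using Fin.lastCases with
            | last => simp
            | cast w' =>
              have hw' : w' ≠ u := fun h => hw (by rw [h])
              simp [hu_eq w' hw']
        exact reach_trans hbr (reach_trans r1 r2)
    obtain ⟨b, hbp, hbr⟩ := key m le_rfl
    rw [hsm] at hbp hbr
    have hinit : Fin.init (canon d k (n + 1) hk) = canon d k n hk := by
      funext i
      simp [Fin.init, canon]
    have hcanon : canon d k (n + 1) hk
        = Fin.snoc (canon d k n hk) (canon d k (n + 1) hk (Fin.last n)) := by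
      rw [← hinit, Fin.snoc_init_self]
    have hcp : IsPathDKColoring (n + 1) d k (canon d k (n + 1) hk) := canon_proper d k (n + 1) hk
    have hfinal : Reach (n + 1) d k (Fin.snoc (canon d k n hk) b) (canon d k (n + 1) hk) := by
      rw [hcanon]
      rw [hcanon] at hcp
      exact reach_of_eq_or_onestep hbp hcp (snoc_step _ _ _)
    exact reach_trans hbr hfinal

theorem path_recolor_to_d_succ_colors (n d k : ℕ) (hd : 1 ≤ d) (hk : d + 2 ≤ k)
    (α : Fin n → Fin k) (hα : IsPathDKColoring n d k α) :
    ∃ β : Fin n → Fin k,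
      IsPathDKColoring n d k β ∧
      (Finset.univ.image β).card ≤ d + 1 ∧
      ∃ (m : ℕ) (seq : ℕ → Fin n → Fin k),
        seq 0 = α ∧ seq m = β ∧
        (∀ i ≤ m, IsPathDKColoring n d k (seq i)) ∧
        (∀ i < m, OneStep (seq i) (seq (i + 1))) := by
  refine ⟨canon d k n hk, canon_proper d k n hk, ?_, reach_canonical d k hk n α hα⟩
  have h1 : (Finset.univ.image (canon d k n hk)).image Fin.val ⊆ Finset.range (d + 1) := by
    intro x hx
    simp only [Finset.mem_image] at hx
    obtain ⟨y, hy, rfl⟩ := hx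
    obtain ⟨i, _, rfl⟩ := hy
    simp only [Finset.mem_range, canon]
    exact Nat.mod_lt _ (Nat.succ_pos d)
  have h2 := Finset.card_le_card h1
  rw [Finset.card_range] at h2
  have h3 := Finset.card_image_of_injective (Finset.univ.image (canon d k n hk)) (Fin.val_injective)
  omega
end

section
/- Let P be a path on n vertices, k ≥ d+2, and let α and β be two (d,k)-colorings of P each using at most d+1 distinct colors. Then there is a reconfiguration sequence of (d,k)-colorings from α to β where consecutive colorings differ at exactly one vertex. -/
/-!
A `(d,k)`-coloring of the path with at most `d + 1` colors is periodic with period `d + 1`: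
among `d + 2` consecutive vertices two share a color, and only the two ends are far enough apart
to do so. Hence such a coloring is `σ ∘ (· mod (d + 1))` for an injective pattern
`σ : Fin (d + 1) → Fin k`. Replacing the color of one residue class by a color that no other class
uses keeps every intermediate coloring proper, so it can be done one vertex at a time. As
`k ≥ d + 2`, a spare color always exists; parking on it the class that holds the target color of
another class lets us make the pattern agree with a target pattern one class at a time.
-/

open Finset Function Relation

theorem Relation.ReflTransGen.exists_chain {α : Type*} {r : α → α → Prop} {a b : α}
    (h : ReflTransGen r a b) :
    ∃ (m : ℕ) (seq : ℕ → α), seq 0 = a ∧ seq m = b ∧ ∀ i < m, r (seq i) (seq (i + 1)) := by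
  induction h with
  | refl => exact ⟨0, fun _ => a, rfl, rfl, by simp⟩
  | @tail b c _ hbc ih =>
    obtain ⟨m, seq, h0, hm, hseq⟩ := ih
    refine ⟨m + 1, update seq (m + 1) c, by simp [h0], by simp, fun i hi => ?_⟩
    rcases Nat.lt_succ_iff_lt_or_eq.mp hi with hi | rfl
    · rw [update_of_ne (by omega), update_of_ne (by omega)]
      exact hseq i hi
    · rwa [update_of_ne (by omega), update_self, hm]

theorem Function.Injective.update_of_forall_ne {α β : Type*} [DecidableEq α] {f : α → β}
    (hf : Injective f) {a : α} {b : β} (hb : ∀ x ≠ a, f x ≠ b) : Injective (update f a b) := by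
  intro x y hxy
  rcases eq_or_ne x a with rfl | hx
  · rcases eq_or_ne y x with rfl | hy
    · rfl
    · rw [update_self, update_of_ne hy] at hxy
      exact absurd hxy.symm (hb y hy)
  · rcases eq_or_ne y a with rfl | hy
    · rw [update_self, update_of_ne hx] at hxy
      exact absurd hxy (hb x hx)
    · rw [update_of_ne hx, update_of_ne hy] at hxy
      exact hf hxy

theorem hammingDist_lt_of_agree {ι β : Type*} [Fintype ι] [DecidableEq β] {x x' y : ι → β}
    (hagree : ∀ i, x i = y i → x' i = y i) {r : ι} (hr : x r ≠ y r) (hr' : x' r = y r) :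
    hammingDist x' y < hammingDist x y := by
  refine card_lt_card ((ssubset_iff_of_subset fun i => ?_).mpr ⟨r, ?_⟩)
  · simpa using mt (hagree i)
  · simp [hr, hr']

variable {n d k : ℕ}

def residue (d : ℕ) (i : Fin n) : Fin (d + 1) := Fin.ofNat (d + 1) i

theorem residue_ne {i j : Fin n} (hij : i ≠ j) (hdist : Nat.dist i j ≤ d) :
    residue d i ≠ residue d j := by
  intro h
  have hmod : (i : ℕ) ≡ j [MOD d + 1] := by simpa [residue, Fin.ext_iff, Nat.ModEq] using h
  unfold Nat.dist at hdist
  exact hij (Fin.ext (hmod.eq_of_abs_lt (abs_sub_lt_iff.mpr ⟨by omega, by omega⟩)))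

section Periodicity

variable {α : Fin n → Fin k} (hα : IsPathDKColoring n d k α)
  (hαc : #(univ.image α) ≤ d + 1)
include hα hαc

theorem IsPathDKColoring.apply_eq_apply_sub (i : Fin n) (hi : d + 1 ≤ i) :
    α i = α ⟨i - (d + 1), by omega⟩ := by
  set j : Fin n := ⟨i - (d + 1), by omega⟩
  have hcard : #(univ.image α) < #(Icc j i) := by
    rw [Fin.card_Icc]
    simp only [j]
    omega
  obtain ⟨x, hx, y, hy, hxy, hcol⟩ :=
    exists_ne_map_eq_of_card_lt_of_maps_to hcard fun x _ =>
      mem_coe.mpr (mem_image_of_mem α (mem_univ x))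
  have hfar : d < Nat.dist x y := by
    by_contra! hnear
    exact hα x y hxy hnear hcol
  simp only [mem_Icc, Fin.le_iff_val_le_val, j] at hx hy
  unfold Nat.dist at hfar
  have hends : (x = j ∧ y = i) ∨ (x = i ∧ y = j) := by
    simp only [Fin.ext_iff, j]
    omega
  rcases hends with ⟨rfl, rfl⟩ | ⟨rfl, rfl⟩
  exacts [hcol.symm, hcol]

theorem IsPathDKColoring.apply_eq_apply_mod (i : Fin n) :
    α i = α ⟨i % (d + 1), (Nat.mod_le _ _).trans_lt i.isLt⟩ := by
  obtain ⟨i, hi⟩ := i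
  induction i using Nat.strong_induction_on with
  | _ i ih =>
    by_cases hid : i < d + 1
    · simp [Nat.mod_eq_of_lt hid]
    · rw [hα.apply_eq_apply_sub hαc ⟨i, hi⟩ (by simp only; omega), ih (i - (d + 1)) (by omega)]
      simp [← Nat.mod_eq_sub_mod (not_lt.mp hid)]

theorem IsPathDKColoring.factorsThrough_residue : FactorsThrough α (residue (n := n) d) := by
  intro i j hij
  rw [hα.apply_eq_apply_mod hαc i, hα.apply_eq_apply_mod hαc j]
  congr 1
  simpa [residue, Fin.ext_iff] using hij

theorem IsPathDKColoring.apply_ne_of_residue_ne {i j : Fin n} (hij : residue d i ≠ residue d j) :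
    α i ≠ α j := by
  rw [hα.apply_eq_apply_mod hαc i, hα.apply_eq_apply_mod hαc j]
  refine hα _ _ (by simpa [residue, Fin.ext_iff] using hij) ?_
  simp only [Nat.dist]
  have := Nat.mod_lt i (show 0 < d + 1 by omega)
  have := Nat.mod_lt j (show 0 < d + 1 by omega)
  omega

theorem IsPathDKColoring.exists_injective_comp_residue_eq (hk : d + 1 ≤ k) :
    ∃ σ : Fin (d + 1) → Fin k, Injective σ ∧ σ ∘ residue d = α := by
  obtain ⟨t, hαt, -, ht⟩ :=
    exists_subsuperset_card_eq (subset_univ (univ.image α)) hαc (by simpa using hk)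
  set f := extend (residue d) α fun _ => (⟨0, by omega⟩ : Fin k)
  have hf : ∀ i, f (residue d i) = α i := (hα.factorsThrough_residue hαc).extend_apply _
  have hmaps : (Set.range (residue (n := n) d)).MapsTo f t := by
    rintro _ ⟨i, rfl⟩
    simpa [hf] using hαt (mem_image_of_mem α (mem_univ i))
  have hinj : (Set.range (residue (n := n) d)).InjOn f := by
    rintro _ ⟨i, rfl⟩ _ ⟨j, rfl⟩ hij
    rw [hf, hf] at hij
    by_contra hne
    exact hα.apply_ne_of_residue_ne hαc hne hij
  obtain ⟨g, hg⟩ := hmaps.exists_equiv_extend_of_card_eq (by simp [ht]) hinj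
  refine ⟨fun p => g p, Subtype.val_injective.comp g.injective, funext fun i => ?_⟩
  simp [hg _ ⟨i, rfl⟩, hf]

end Periodicity

def RecolorStep (n d k : ℕ) (α β : Fin n → Fin k) : Prop :=
  IsPathDKColoring n d k β ∧ OneStep α β

theorem reflTransGen_recolorStep_of_forall_isPathDKColoring {α β : Fin n → Fin k}
    (h : ∀ t : ℕ, IsPathDKColoring n d k fun i => if i.val < t then β i else α i) :
    ReflTransGen (RecolorStep n d k) α β := by
  set γ : ℕ → Fin n → Fin k := fun t i => if i.val < t then β i else α i
  have hagree : ∀ t (w : Fin n), w.val ≠ t → γ t w = γ (t + 1) w := by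
    intro t w hw
    simp only [γ]
    split_ifs <;> first | rfl | omega
  have hreach : ∀ t, ReflTransGen (RecolorStep n d k) α (γ t) := by
    intro t
    induction t with
    | zero => rw [show γ 0 = α by funext i; simp [γ]]
    | succ t ih =>
      refine ih.trans ?_
      by_cases heq : γ t = γ (t + 1)
      · rw [heq]
      · obtain ⟨v, hv⟩ := ne_iff.mp heq
        have hvt : v.val = t := by
          by_contra hvt
          exact hv (hagree t v hvt)
        refine .single ⟨h (t + 1), v, hv, fun w hw => hagree t w fun hwt => hw ?_⟩
        exact Fin.ext (hwt.trans hvt.symm)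
  simpa [γ] using hreach n

theorem isPathDKColoring_of_forall_eq_or_eq {σ σ' : Fin (d + 1) → Fin k} (hσ : Injective σ)
    (hσ' : Injective σ') (hcross : ∀ p q, p ≠ q → σ p ≠ σ' q) {γ : Fin n → Fin k}
    (hγ : ∀ i, γ i = σ (residue d i) ∨ γ i = σ' (residue d i)) : IsPathDKColoring n d k γ := by
  intro i j hij hdist
  have hres := residue_ne hij hdist
  rcases hγ i with hi | hi <;> rcases hγ j with hj | hj <;> rw [hi, hj]
  · exact hσ.ne hres
  · exact hcross _ _ hres
  · exact (hcross _ _ hres.symm).symm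
  · exact hσ'.ne hres

theorem reflTransGen_recolorStep_update {σ : Fin (d + 1) → Fin k} (hσ : Injective σ)
    {r : Fin (d + 1)} {c : Fin k} (hc : ∀ p ≠ r, σ p ≠ c) :
    ReflTransGen (RecolorStep n d k) (σ ∘ residue d) (update σ r c ∘ residue d) := by
  have hcross : ∀ p q, p ≠ q → σ p ≠ update σ r c q := by
    intro p q hpq
    rcases eq_or_ne q r with rfl | hqr
    · simpa using hc p hpq
    · simpa [hqr] using hσ.ne hpq
  refine reflTransGen_recolorStep_of_forall_isPathDKColoring fun t =>
    isPathDKColoring_of_forall_eq_or_eq hσ (hσ.update_of_forall_ne hc) hcross fun i => ?_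
  simp only [comp_apply]
  split_ifs <;> simp

theorem exists_reflTransGen_recolorStep_forall_ne (hk : d + 2 ≤ k) {σ : Fin (d + 1) → Fin k}
    (hσ : Injective σ) (r : Fin (d + 1)) (c : Fin k) :
    ∃ σ₁, Injective σ₁ ∧
      ReflTransGen (RecolorStep n d k) (σ ∘ residue d) (σ₁ ∘ residue d) ∧
      (∀ p, σ p ≠ c → σ₁ p = σ p) ∧ ∀ p ≠ r, σ₁ p ≠ c := by
  by_cases hfree : ∀ p ≠ r, σ p ≠ c
  · exact ⟨σ, hσ, .refl, fun _ _ => rfl, hfree⟩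
  -- the class `s` holding `c` is moved to a color `c₀` unused by `σ`
  push Not at hfree
  obtain ⟨s, -, hs⟩ := hfree
  obtain ⟨c₀, hc₀⟩ : ∃ c₀, ∀ p, σ p ≠ c₀ := by
    by_contra! hsurj
    have := Fintype.card_le_of_surjective σ hsurj
    simp only [Fintype.card_fin] at this
    omega
  refine ⟨update σ s c₀, hσ.update_of_forall_ne fun p _ => hc₀ p,
    reflTransGen_recolorStep_update hσ fun p _ => hc₀ p, fun p hp => ?_, fun p _ => ?_⟩
  · rw [update_of_ne (by rintro rfl; exact hp hs)]
  · rcases eq_or_ne p s with rfl | hps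
    · simpa [hs] using (hc₀ p).symm
    · rw [update_of_ne hps, ← hs]
      exact hσ.ne hps

theorem exists_reflTransGen_recolorStep_hammingDist_lt (hk : d + 2 ≤ k)
    {σ τ : Fin (d + 1) → Fin k} (hσ : Injective σ) (hτ : Injective τ) (hστ : σ ≠ τ) :
    ∃ σ', Injective σ' ∧
      ReflTransGen (RecolorStep n d k) (σ ∘ residue d) (σ' ∘ residue d) ∧
      hammingDist σ' τ < hammingDist σ τ := by
  obtain ⟨r, hr⟩ := ne_iff.mp hστ
  obtain ⟨σ₁, hσ₁, hmove₁, hkeep, hfree⟩ :=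
    exists_reflTransGen_recolorStep_forall_ne (n := n) hk hσ r (τ r)
  refine ⟨update σ₁ r (τ r), hσ₁.update_of_forall_ne hfree,
    hmove₁.trans (reflTransGen_recolorStep_update hσ₁ hfree),
    hammingDist_lt_of_agree (fun p hp => ?_) hr (by simp)⟩
  have hpr : p ≠ r := by
    rintro rfl
    exact hr hp
  rw [update_of_ne hpr, hkeep p (hp ▸ hτ.ne hpr)]
  exact hp

theorem reflTransGen_recolorStep_comp_residue (hk : d + 2 ≤ k) {σ τ : Fin (d + 1) → Fin k}
    (hσ : Injective σ) (hτ : Injective τ) :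
    ReflTransGen (RecolorStep n d k) (σ ∘ residue d) (τ ∘ residue d) := by
  induction hD : hammingDist σ τ using Nat.strong_induction_on generalizing σ with
  | _ D ih =>
    by_cases hστ : σ = τ
    · rw [hστ]
    · obtain ⟨σ', hσ', hmove, hlt⟩ :=
        exists_reflTransGen_recolorStep_hammingDist_lt (n := n) hk hσ hτ hστ
      exact hmove.trans (ih _ (hD ▸ hlt) hσ' rfl)

theorem path_reconf_between_compact_colorings_general (n d k : ℕ) (hk : d + 2 ≤ k)
    (α β : Fin n → Fin k)
    (hα : IsPathDKColoring n d k α) (hβ : IsPathDKColoring n d k β)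
    (hαc : (Finset.univ.image α).card ≤ d + 1)
    (hβc : (Finset.univ.image β).card ≤ d + 1) :
    ∃ (m : ℕ) (seq : ℕ → Fin n → Fin k),
      seq 0 = α ∧ seq m = β ∧
      (∀ i ≤ m, IsPathDKColoring n d k (seq i)) ∧
      (∀ i < m, OneStep (seq i) (seq (i + 1))) := by
  obtain ⟨σ, hσ, rfl⟩ := hα.exists_injective_comp_residue_eq hαc (by omega)
  obtain ⟨τ, hτ, rfl⟩ := hβ.exists_injective_comp_residue_eq hβc (by omega)
  obtain ⟨m, seq, h0, hm, hsteps⟩ := (reflTransGen_recolorStep_comp_residue hk hσ hτ).exists_chain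
  have hproper : ∀ i ≤ m, IsPathDKColoring n d k (seq i) := by
    intro i hi
    cases i with
    | zero => rwa [h0]
    | succ i => exact (hsteps i hi).1
  exact ⟨m, seq, h0, hm, hproper, fun i hi => (hsteps i hi).2⟩

theorem path_reconf_between_compact_colorings (n d k : ℕ) (hd : 1 ≤ d) (hk : d + 2 ≤ k)
    (α β : Fin n → Fin k)
    (hα : IsPathDKColoring n d k α) (hβ : IsPathDKColoring n d k β)
    (hαc : (Finset.univ.image α).card ≤ d + 1)
    (hβc : (Finset.univ.image β).card ≤ d + 1) :
    ∃ (m : ℕ) (seq : ℕ → Fin n → Fin k),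
      seq 0 = α ∧ seq m = β ∧
      (∀ i ≤ m, IsPathDKColoring n d k (seq i)) ∧
      (∀ i < m, OneStep (seq i) (seq (i + 1))) :=
  path_reconf_between_compact_colorings_general n d k hk α β hα hβ hαc hβc
end

section
/- For any d ≥ 1 and k ≥ d+2, any two (d,k)-colorings of a path are connected by a reconfiguration sequence; i.e., every instance of (d,k)-coloring reconfiguration on paths with k ≥ d+2 is a yes-instance. -/
/-!
The `d`-th power of a path is `d`-degenerate: vertex `n` has only the `d` neighbours
`n - d, …, n - 1` among its predecessors. Induct on the number of vertices. A reconfiguration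
sequence of the first `n` vertices lifts to the first `n + 1`: before each move, vertex `n` is
recoloured to one of the `k ≥ d + 2` colours avoiding its `d` left neighbours and the colour
being introduced, so the move cannot clash with it. At the end vertex `n` takes its target colour.
-/

open Function Relation

theorem Relation.ReflTransGen.exists_seq {α : Type*} {r : α → α → Prop} {a b : α}
    (h : ReflTransGen r a b) :
    ∃ (m : ℕ) (s : ℕ → α), s 0 = a ∧ s m = b ∧ ∀ i < m, r (s i) (s (i + 1)) := by
  induction h with
  | refl => exact ⟨0, fun _ => a, rfl, rfl, by simp⟩
  | @tail b c _ hbc ih =>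
    obtain ⟨m, s, hs0, hsm, hs⟩ := ih
    refine ⟨m + 1, update s (m + 1) c, by simp [hs0], by simp, fun i hi => ?_⟩
    rcases Nat.lt_succ_iff_lt_or_eq.1 hi with hi | rfl
    · rw [update_of_ne (by omega), update_of_ne (by omega)]
      exact hs i hi
    · rwa [update_of_ne (by omega), update_self, hsm]

namespace PathReconfiguration

/-- Colourings of the first `n` vertices of the path are encoded as colourings of `ℕ` whose
values at `i ≥ n` are ignored, so that vertices can be added without changing the type. -/
def IsColoringBelow (d k n : ℕ) (f : ℕ → Fin k) : Prop :=
  ∀ i j, i < n → j < n → i ≠ j → Nat.dist i j ≤ d → f i ≠ f j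

def ReconfStep (d k n : ℕ) (f g : ℕ → Fin k) : Prop :=
  IsColoringBelow d k n f ∧ IsColoringBelow d k n g ∧
    ∃ v < n, f v ≠ g v ∧ ∀ w ≠ v, f w = g w

variable {d k n : ℕ} {f g : ℕ → Fin k}

theorem isColoringBelow_iff_comp_val :
    IsColoringBelow d k n f ↔ IsPathDKColoring n d k (f ∘ Fin.val) :=
  ⟨fun h i j hij => h i j i.isLt j.isLt (Fin.val_ne_of_ne hij),
    fun h i j hi hj hij => h ⟨i, hi⟩ ⟨j, hj⟩ (Fin.ne_of_val_ne hij)⟩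

theorem ReconfStep.oneStep_comp_val (h : ReconfStep d k n f g) :
    OneStep (f ∘ Fin.val : Fin n → Fin k) (g ∘ Fin.val) := by
  obtain ⟨-, -, v, hv, hne, heq⟩ := h
  exact ⟨⟨v, hv⟩, hne, fun w hw => heq w (Fin.val_ne_of_ne hw)⟩

theorem IsColoringBelow.mono {m : ℕ} (h : IsColoringBelow d k n f) (hmn : m ≤ n) :
    IsColoringBelow d k m f :=
  fun i j hi hj => h i j (hi.trans_le hmn) (hj.trans_le hmn)

theorem IsColoringBelow.congr (h : IsColoringBelow d k n f) (hfg : ∀ i < n, f i = g i) :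
    IsColoringBelow d k n g := by
  intro i j hi hj
  rw [← hfg i hi, ← hfg j hj]
  exact h i j hi hj

theorem IsColoringBelow.update_succ (hf : IsColoringBelow d k n f) {c : Fin k}
    (hc : ∀ j ∈ Finset.Ico (n - d) n, f j ≠ c) :
    IsColoringBelow d k (n + 1) (update f n c) := by
  have hnear : ∀ j < n, Nat.dist j n ≤ d → f j ≠ c := fun j hj hdist =>
    hc j (Finset.mem_Ico.2 ⟨by simp only [Nat.dist] at hdist; omega, hj⟩)
  intro i j hi hj hij hdist
  rcases Nat.lt_succ_iff_lt_or_eq.1 hi with hi | rfl <;>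
    rcases Nat.lt_succ_iff_lt_or_eq.1 hj with hj | rfl
  · rw [update_of_ne hi.ne, update_of_ne hj.ne]
    exact hf i j hi hj hij hdist
  · rw [update_of_ne hi.ne, update_self]
    exact hnear i hi hdist
  · rw [update_of_ne hj.ne, update_self]
    exact (hnear j hj (Nat.dist_comm i j ▸ hdist)).symm
  · exact absurd rfl hij

theorem IsColoringBelow.of_reflTransGen (h : ReflTransGen (ReconfStep d k n) f g)
    (hf : IsColoringBelow d k n f) : IsColoringBelow d k n g := by
  rcases h.cases_tail with rfl | ⟨_, _, hstep⟩
  exacts [hf, hstep.2.1]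

theorem exists_fresh_color (hk : d + 2 ≤ k) (f : ℕ → Fin k) (n : ℕ) (c : Fin k) :
    ∃ c', c' ≠ c ∧ ∀ j ∈ Finset.Ico (n - d) n, f j ≠ c' := by
  set forbidden := insert c ((Finset.Ico (n - d) n).image f)
  have hcard : forbidden.card < (Finset.univ : Finset (Fin k)).card := calc
    forbidden.card ≤ (Finset.Ico (n - d) n).card + 1 :=
      (Finset.card_insert_le _ _).trans (Nat.succ_le_succ Finset.card_image_le)
    _ < k := by simp only [Nat.card_Ico]; omega
    _ = _ := (Finset.card_fin k).symm
  obtain ⟨c', -, hc'⟩ := Finset.exists_mem_notMem_of_card_lt_card hcard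
  simp only [forbidden, Finset.mem_insert, Finset.mem_image, not_or, not_exists, not_and] at hc'
  exact ⟨c', hc'.1, hc'.2⟩

theorem reflTransGen_update {v : ℕ} {c : Fin k} (hv : v < n) (hf : IsColoringBelow d k n f)
    (hfc : IsColoringBelow d k n (update f v c)) :
    ReflTransGen (ReconfStep d k n) f (update f v c) := by
  by_cases h : f v = c
  · rw [← h, update_eq_self]
  · exact .single
      ⟨hf, hfc, v, hv, by rwa [update_self], fun w hw => (update_of_ne hw _ _).symm⟩

theorem ReconfStep.exists_lift (hk : d + 2 ≤ k) (hfg : ReconfStep d k n f g) {c : Fin k}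
    (hfc : IsColoringBelow d k (n + 1) (update f n c)) :
    ∃ c', ReflTransGen (ReconfStep d k (n + 1)) (update f n c) (update g n c') := by
  obtain ⟨hf, hg, v, hv, hne, heq⟩ := hfg
  obtain ⟨c', hc'v, hc'⟩ := exists_fresh_color hk f n (g v)
  have hfc' := hf.update_succ hc'
  have hgc' : IsColoringBelow d k (n + 1) (update g n c') := by
    refine hg.update_succ fun j hj => ?_
    by_cases hjv : j = v
    · exact hjv ▸ hc'v.symm
    · exact heq j hjv ▸ hc' j hj
  have hrecolor := reflTransGen_update (c := c') n.lt_succ_self hfc (by rwa [update_idem])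
  rw [update_idem] at hrecolor
  refine ⟨c', hrecolor.tail ⟨hfc', hgc', v, hv.trans n.lt_succ_self, ?_, fun w hw => ?_⟩⟩
  · rwa [update_of_ne hv.ne, update_of_ne hv.ne]
  · by_cases hwn : w = n
    · rw [hwn, update_self, update_self]
    · rw [update_of_ne hwn, update_of_ne hwn, heq w hw]

theorem exists_lift_of_reflTransGen (hk : d + 2 ≤ k) (h : ReflTransGen (ReconfStep d k n) f g)
    {c : Fin k} (hfc : IsColoringBelow d k (n + 1) (update f n c)) :
    ∃ c', ReflTransGen (ReconfStep d k (n + 1)) (update f n c) (update g n c') := by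
  induction h with
  | refl => exact ⟨c, .refl⟩
  | tail _ hstep ih =>
    obtain ⟨c', hc'⟩ := ih
    obtain ⟨c'', hc''⟩ := hstep.exists_lift hk (hfc.of_reflTransGen hc')
    exact ⟨c'', hc'.trans hc''⟩

theorem reflTransGen_reconfStep (hk : d + 2 ≤ k) (hf : IsColoringBelow d k n f)
    (hg : IsColoringBelow d k n g) (hfg : ∀ i ≥ n, f i = g i) :
    ReflTransGen (ReconfStep d k n) f g := by
  induction n generalizing g with
  | zero => rw [funext fun i => hfg i i.zero_le]
  | succ n ih =>
    have hg' : IsColoringBelow d k n (update g n (f n)) :=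
      (hg.mono n.le_succ).congr fun i hi => (update_of_ne hi.ne _ _).symm
    have hfg' : ∀ i ≥ n, f i = update g n (f n) i := by
      intro i hi
      rcases hi.eq_or_lt with rfl | hi
      · rw [update_self]
      · rw [update_of_ne hi.ne', hfg i hi]
    obtain ⟨c, hc⟩ := exists_lift_of_reflTransGen hk (ih (hf.mono n.le_succ) hg' hfg')
      (c := f n) (by rwa [update_eq_self])
    rw [update_eq_self, update_idem] at hc
    have hrecolor := reflTransGen_update (c := g n) n.lt_succ_self (hf.of_reflTransGen hc)
      (by rwa [update_idem, update_eq_self])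
    rw [update_idem, update_eq_self] at hrecolor
    exact hc.trans hrecolor

end PathReconfiguration

open PathReconfiguration in
theorem path_reconf_always_yes_general (n d k : ℕ) (hk : d + 2 ≤ k)
    (α β : Fin n → Fin k)
    (hα : IsPathDKColoring n d k α) (hβ : IsPathDKColoring n d k β) :
    ∃ (m : ℕ) (seq : ℕ → Fin n → Fin k),
      seq 0 = α ∧ seq m = β ∧
      (∀ i ≤ m, IsPathDKColoring n d k (seq i)) ∧
      (∀ i < m, OneStep (seq i) (seq (i + 1))) := by
  let c : Fin k := ⟨0, by omega⟩
  set f : ℕ → Fin k := fun i => if h : i < n then α ⟨i, h⟩ else c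
  set g : ℕ → Fin k := fun i => if h : i < n then β ⟨i, h⟩ else c
  have hfα : f ∘ Fin.val = α := funext fun i => dif_pos i.isLt
  have hgβ : g ∘ Fin.val = β := funext fun i => dif_pos i.isLt
  have hf : IsColoringBelow d k n f := isColoringBelow_iff_comp_val.2 (hfα ▸ hα)
  have hg : IsColoringBelow d k n g := isColoringBelow_iff_comp_val.2 (hgβ ▸ hβ)
  have hfg : ∀ i ≥ n, f i = g i := fun i hi => by
    simp only [f, g, dif_neg hi.not_gt]
  obtain ⟨m, s, hs0, hsm, hs⟩ := (reflTransGen_reconfStep hk hf hg hfg).exists_seq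
  refine ⟨m, fun i => s i ∘ Fin.val, show s 0 ∘ Fin.val = α from hs0 ▸ hfα,
    show s m ∘ Fin.val = β from hsm ▸ hgβ, fun i hi => ?_,
    fun i hi => (hs i hi).oneStep_comp_val⟩
  rcases hi.lt_or_eq with hi | rfl
  · exact isColoringBelow_iff_comp_val.1 (hs i hi).1
  · exact isColoringBelow_iff_comp_val.1 (hsm ▸ hg)

theorem path_reconf_always_yes (n d k : ℕ) (hd : 1 ≤ d) (hk : d + 2 ≤ k)
    (α β : Fin n → Fin k)
    (hα : IsPathDKColoring n d k α) (hβ : IsPathDKColoring n d k β) :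
    ∃ (m : ℕ) (seq : ℕ → Fin n → Fin k),
      seq 0 = α ∧ seq m = β ∧
      (∀ i ≤ m, IsPathDKColoring n d k (seq i)) ∧
      (∀ i < m, OneStep (seq i) (seq (i + 1))) :=
  path_reconf_always_yes_general n d k hk α β hα hβ
end
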